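/- With g, ι as above, define (u|u') = ι(uu') ∈ U(g₀). Then for every subset J of the index set I of the ordered basis of g₁, there exist elements u_J, v_J ∈ U(g) such that (u_J | x_{J'}) = δ_{J,J'} and (x_{J'} | v_J) = δ_{J,J'} for all J' ⊆ I. -/

import Mathlib

/-!
Write `F^k` for the odd filtration. Because `[g₀, g₁] ⊆ g₁` and `[g₁, g₁] ⊆ g₀`, left
multiplication by an odd element raises the filtration degree by at most one, and reordering a
product of odd basis vectors costs only a sign modulo lower filtration:
`x_A x_B ≡ ±x_{A ∪ B} mod F^{|A|+|B|-1}` (when `A` and `B` meet, `x_{A ∪ B}` is itself of lower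
filtration). Since `ι` kills `F^{|I|-1}` and `ι x_I = 1`, the pairing `ι (x_{Jᶜ} x_{J'})` equals
`±δ_{J,J'}` whenever `|J'| ≤ |J|`. This unitriangularity with respect to `|J|` lets one correct
`±x_{Jᶜ}` into an exact dual element by downward induction on `|J|`, using that `ι` is
`U(g₀)`-linear; the same argument on the other side gives `v_J`.
-/

noncomputable section

/-- Ordered product `x_J` of odd basis elements indexed by a finite set `J`. -/
def xprod {U : Type*} [Ring U] {I : Type*} [LinearOrder I] (x : I → U) (J : Finset I) : U :=
  ((J.sort (· ≤ ·)).map x).prod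

/-- The even enveloping subalgebra `U(g₀)` realized inside `U = U(g)`. -/
def evenEnv {U : Type*} [Ring U] [Algebra ℂ U] (g0 : Submodule ℂ U) : Subalgebra ℂ U :=
  Algebra.adjoin ℂ (g0 : Set U)

/-- The odd filtration `F_o^k = Σ_{|J| ≤ k} U(g₀)·x_J`. -/
def oddFil {U : Type*} [Ring U] [Algebra ℂ U] {I : Type*} [LinearOrder I]
    (g0 : Submodule ℂ U) (x : I → U) (k : ℕ) : Submodule ℂ U :=
  Submodule.span ℂ
    {z | ∃ u0 ∈ evenEnv g0, ∃ J : Finset I, J.card ≤ k ∧ z = u0 * xprod x J}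

section Monomials

variable {U : Type*} [Ring U] {I : Type*} [LinearOrder I] {x : I → U}

@[simp]
lemma xprod_empty (x : I → U) : xprod x ∅ = 1 := by
  simp [xprod]

lemma xprod_insert_of_lt {i : I} {J : Finset I} (h : ∀ j ∈ J, i < j) :
    xprod x (insert i J) = x i * xprod x J := by
  rw [xprod, Finset.sort_insert _ (fun j hj => (h j hj).le) (fun hi => lt_irrefl i (h i hi))]
  simp [xprod]

@[simp]
lemma xprod_singleton (i : I) : xprod x {i} = x i := by
  simpa using xprod_insert_of_lt (x := x) (i := i) (J := ∅) (by simp)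

end Monomials

section Filtration

variable {U : Type*} [Ring U] [Algebra ℂ U] {I : Type*} [LinearOrder I]
  {g0 : Submodule ℂ U} {x : I → U}

lemma oddFil_mono {k l : ℕ} (h : k ≤ l) : oddFil g0 x k ≤ oddFil g0 x l :=
  Submodule.span_mono fun _ ⟨u0, hu0, J, hJ, hz⟩ => ⟨u0, hu0, J, hJ.trans h, hz⟩

lemma mul_xprod_mem_oddFil {u0 : U} (hu0 : u0 ∈ evenEnv g0) {J : Finset I} {k : ℕ}
    (h : J.card ≤ k) : u0 * xprod x J ∈ oddFil g0 x k :=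
  Submodule.subset_span ⟨u0, hu0, J, h, rfl⟩

lemma xprod_mem_oddFil {J : Finset I} {k : ℕ} (h : J.card ≤ k) :
    xprod x J ∈ oddFil g0 x k := by
  simpa using mul_xprod_mem_oddFil (one_mem (evenEnv g0)) h

lemma evenEnv_mul_mem_oddFil {u0 : U} (hu0 : u0 ∈ evenEnv g0) {k : ℕ} {z : U}
    (hz : z ∈ oddFil g0 x k) : u0 * z ∈ oddFil g0 x k := by
  refine (Submodule.span_le (p := (oddFil g0 x k).comap (LinearMap.mulLeft ℂ u0))).mpr ?_ hz
  rintro _ ⟨u0', hu0', J, hJ, rfl⟩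
  simpa [← mul_assoc] using mul_xprod_mem_oddFil (mul_mem hu0 hu0') hJ

end Filtration

lemma Subalgebra.mul_mem_toSubmodule_mul {R A : Type*} [CommSemiring R] [Semiring A]
    [Algebra R A] {S : Subalgebra R A} {M : Submodule R A} {a m : A} (ha : a ∈ S)
    (hm : m ∈ S.toSubmodule * M) : a * m ∈ S.toSubmodule * M := by
  induction hm using Submodule.mul_induction_on' with
  | mem_mul_mem b hb y hy =>
    have hab : a * b ∈ S := mul_mem ha hb
    simpa [← mul_assoc] using Submodule.mul_mem_mul (M := S.toSubmodule) hab hy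
  | add m _ m' _ hm hm' => simpa [mul_add] using add_mem hm hm'

section Commutation

variable {U : Type*} [Ring U] [Algebra ℂ U] {g0 g1 : Submodule ℂ U}

lemma odd_mul_evenEnv_le (h01 : ∀ a ∈ g0, ∀ b ∈ g1, a * b - b * a ∈ g1) :
    g1 * (evenEnv g0).toSubmodule ≤ (evenEnv g0).toSubmodule * g1 := by
  rw [Submodule.mul_le]
  intro y hy u0 hu0
  induction hu0 using Algebra.adjoin_induction generalizing y with
  | mem a ha =>
    have hay : a * y ∈ (evenEnv g0).toSubmodule * g1 :=
      Submodule.mul_mem_mul (M := (evenEnv g0).toSubmodule) (Algebra.subset_adjoin ha) hy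
    have hcomm : a * y - y * a ∈ (evenEnv g0).toSubmodule * g1 := by
      simpa using Submodule.mul_mem_mul (M := (evenEnv g0).toSubmodule)
        (one_mem (evenEnv g0)) (h01 a ha y hy)
    simpa using sub_mem hay hcomm
  | algebraMap r =>
    simpa [Algebra.commutes] using Submodule.mul_mem_mul (M := (evenEnv g0).toSubmodule)
      (algebraMap_mem (evenEnv g0) r) hy
  | add u v _ _ hu hv => simpa [mul_add] using add_mem (hu y hy) (hv y hy)
  | mul u v _ _ hu hv =>
    rw [← mul_assoc]
    have hyu := hu y hy
    generalize y * u = w at hyu ⊢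
    induction hyu using Submodule.mul_induction_on' with
    | mem_mul_mem b hb y' hy' =>
      simpa [mul_assoc] using Subalgebra.mul_mem_toSubmodule_mul hb (hv y' hy')
    | add m _ m' _ hm hm' => simpa [add_mul] using add_mem hm hm'

end Commutation

section OddFiltration

variable {U : Type*} [Ring U] [Algebra ℂ U] {I : Type*} [LinearOrder I]
  {g0 g1 : Submodule ℂ U} {x : I → U}

lemma x_mul_xprod_mem_oddFil_of_sub_mem {i : I} {K : Finset I} {ε : ℂˣ}
    (h : x i * xprod x K - ε • xprod x (insert i K) ∈ oddFil g0 x K.card) :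
    x i * xprod x K ∈ oddFil g0 x (K.card + 1) := by
  have hins : ε • xprod x (insert i K) ∈ oddFil g0 x (K.card + 1) :=
    Submodule.smul_of_tower_mem _ ε (xprod_mem_oddFil (Finset.card_insert_le i K))
  simpa using add_mem (oddFil_mono K.card.le_succ h) hins

lemma odd_mul_mem_oddFil_succ_of_forall (h01 : ∀ a ∈ g0, ∀ b ∈ g1, a * b - b * a ∈ g1)
    (hxspan : Submodule.span ℂ (Set.range x) = g1) {k : ℕ}
    (hstep : ∀ J : Finset I, J.card ≤ k → ∀ i, x i * xprod x J ∈ oddFil g0 x (k + 1))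
    {y z : U} (hy : y ∈ g1) (hz : z ∈ oddFil g0 x k) : y * z ∈ oddFil g0 x (k + 1) := by
  refine (Submodule.span_le
    (p := (oddFil g0 x (k + 1)).comap (LinearMap.mulLeft ℂ y))).mpr ?_ hz
  rintro _ ⟨u0, hu0, J, hJ, rfl⟩
  have hodd : g1 ≤ (oddFil g0 x (k + 1)).comap (LinearMap.mulRight ℂ (xprod x J)) := by
    rw [← hxspan, Submodule.span_le]
    rintro _ ⟨i, rfl⟩
    exact hstep J hJ i
  have hyu0 : y * u0 ∈ (evenEnv g0).toSubmodule * g1 :=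
    odd_mul_evenEnv_le h01 (Submodule.mul_mem_mul (N := (evenEnv g0).toSubmodule) hy hu0)
  change y * (u0 * xprod x J) ∈ oddFil g0 x (k + 1)
  rw [← mul_assoc]
  generalize y * u0 = w at hyu0 ⊢
  induction hyu0 using Submodule.mul_induction_on' with
  | mem_mul_mem a ha y' hy' => simpa [mul_assoc] using evenEnv_mul_mem_oddFil ha (hodd hy')
  | add m _ m' _ hm hm' => simpa [add_mul] using add_mem hm hm'

/-- Peel off the least index `j` of `J`: for `j < i` commute `x i` past `x j` using
`x i * x j = (x i * x j + x j * x i) - x j * x i` with the anticommutator in `g₀`; for `i = j`,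
`x j * x j` is half an anticommutator. -/
lemma exists_x_mul_xprod_sub_mem (h01 : ∀ a ∈ g0, ∀ b ∈ g1, a * b - b * a ∈ g1)
    (h11 : ∀ a ∈ g1, ∀ b ∈ g1, a * b + b * a ∈ g0) (hx : ∀ i, x i ∈ g1)
    (hxspan : Submodule.span ℂ (Set.range x) = g1) (J : Finset I) (i : I) :
    ∃ ε : ℂˣ, x i * xprod x J - ε • xprod x (insert i J) ∈ oddFil g0 x J.card := by
  induction hk : J.card using Nat.strong_induction_on generalizing J i with
  | _ k ih =>
  subst hk
  rcases J.eq_empty_or_nonempty with rfl | hne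
  · exact ⟨1, by simp⟩
  set j := J.min' hne
  set J' := J.erase j
  have hjJ' : ∀ l ∈ J', j < l := fun l hl => J.min'_lt_of_mem_erase_min' hne hl
  have hJ : J = insert j J' := (Finset.insert_erase (J.min'_mem hne)).symm
  have hcard : J'.card + 1 = J.card := Finset.card_erase_add_one (J.min'_mem hne)
  have hxJ : xprod x J = x j * xprod x J' := by rw [hJ, xprod_insert_of_lt hjJ']
  rcases lt_trichotomy i j with hij | rfl | hji
  · refine ⟨1, ?_⟩
    rw [xprod_insert_of_lt fun l hl => hij.trans_le (J.min'_le l hl), one_smul, sub_self]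
    exact zero_mem _
  · have hsq : x j * x j ∈ evenEnv g0 := by
      have h2 : x j * x j = (2⁻¹ : ℂ) • (x j * x j + x j * x j) := by
        rw [← two_smul ℂ, smul_smul]; norm_num
      rw [h2]
      exact Subalgebra.smul_mem _ (Algebra.subset_adjoin (h11 _ (hx j) _ (hx j))) _
    refine ⟨1, ?_⟩
    rw [Finset.insert_eq_of_mem (J.min'_mem hne), one_smul]
    refine sub_mem ?_ (xprod_mem_oddFil le_rfl)
    rw [hxJ, ← mul_assoc]
    exact mul_xprod_mem_oddFil hsq (by omega)
  · obtain ⟨ε, hε⟩ := ih J'.card (by omega) J' i rfl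
    have hstep : ∀ K : Finset I, K.card ≤ J'.card → ∀ i', x i' * xprod x K ∈
        oddFil g0 x (J'.card + 1) := fun K hK i' =>
      have ⟨_, h⟩ := ih K.card (by omega) K i' rfl
      oddFil_mono (by omega) (x_mul_xprod_mem_oddFil_of_sub_mem h)
    have hins : xprod x (insert i J) = x j * xprod x (insert i J') := by
      rw [hJ, Finset.insert_comm, xprod_insert_of_lt]
      simpa [hji] using hjJ'
    have hanti : x i * x j + x j * x i ∈ evenEnv g0 :=
      Algebra.subset_adjoin (h11 _ (hx i) _ (hx j))
    refine ⟨-ε, ?_⟩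
    have hid : x i * xprod x J - (-ε) • xprod x (insert i J) =
        (x i * x j + x j * x i) * xprod x J' -
          x j * (x i * xprod x J' - ε • xprod x (insert i J')) := by
      rw [hxJ, hins]
      simp only [Units.neg_smul, mul_sub, add_mul, mul_assoc, mul_smul_comm]
      abel
    rw [hid, ← hcard]
    exact sub_mem (mul_xprod_mem_oddFil hanti (by omega))
      (odd_mul_mem_oddFil_succ_of_forall h01 hxspan hstep (hx j) hε)

lemma odd_mul_mem_oddFil_succ (h01 : ∀ a ∈ g0, ∀ b ∈ g1, a * b - b * a ∈ g1)
    (h11 : ∀ a ∈ g1, ∀ b ∈ g1, a * b + b * a ∈ g0) (hx : ∀ i, x i ∈ g1)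
    (hxspan : Submodule.span ℂ (Set.range x) = g1) {k : ℕ} {y z : U} (hy : y ∈ g1)
    (hz : z ∈ oddFil g0 x k) : y * z ∈ oddFil g0 x (k + 1) := by
  refine odd_mul_mem_oddFil_succ_of_forall h01 hxspan (fun J hJ i => ?_) hy hz
  obtain ⟨_, h⟩ := exists_x_mul_xprod_sub_mem h01 h11 hx hxspan J i
  exact oddFil_mono (by omega) (x_mul_xprod_mem_oddFil_of_sub_mem h)

lemma exists_xprod_mul_xprod_sub_mem (h01 : ∀ a ∈ g0, ∀ b ∈ g1, a * b - b * a ∈ g1)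
    (h11 : ∀ a ∈ g1, ∀ b ∈ g1, a * b + b * a ∈ g0) (hx : ∀ i, x i ∈ g1)
    (hxspan : Submodule.span ℂ (Set.range x) = g1) (A B : Finset I) :
    ∃ ε : ℂˣ, xprod x A * xprod x B - ε • xprod x (A ∪ B) ∈
      oddFil g0 x (A.card + B.card - 1) := by
  induction A using Finset.induction_on_min with
  | empty => exact ⟨1, by simp⟩
  | insert a A' ha ih =>
    obtain ⟨ε', hε'⟩ := exists_x_mul_xprod_sub_mem h01 h11 hx hxspan (A' ∪ B) a
    rw [Finset.insert_union, xprod_insert_of_lt ha,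
      Finset.card_insert_of_notMem fun h => lt_irrefl a (ha a h)]
    rcases A'.eq_empty_or_nonempty with rfl | hne
    · exact ⟨ε', by simpa using hε'⟩
    obtain ⟨ε, hε⟩ := ih
    have hA' := hne.card_pos
    refine ⟨ε * ε', ?_⟩
    have hid : x a * xprod x A' * xprod x B - (ε * ε') • xprod x (insert a (A' ∪ B)) =
        x a * (xprod x A' * xprod x B - ε • xprod x (A' ∪ B)) +
          ε • (x a * xprod x (A' ∪ B) - ε' • xprod x (insert a (A' ∪ B))) := by
      simp only [mul_sub, smul_sub, mul_smul_comm, mul_smul, mul_assoc]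
      abel
    rw [hid]
    refine add_mem ?_ (Submodule.smul_of_tower_mem _ ε (oddFil_mono ?_ hε'))
    · simpa [show A'.card + B.card - 1 + 1 = A'.card + 1 + B.card - 1 by omega] using
        odd_mul_mem_oddFil_succ h01 h11 hx hxspan (hx a) hε
    · have := Finset.card_union_le A' B
      omega

end OddFiltration

section Unitriangular

variable {U κ : Type*} [Ring U] [Fintype κ] [DecidableEq κ]

/-- Dual elements are built by downward induction on the rank, subtracting from `w` the
corrections `ι (w * b K) * u K` for the already constructed duals `u K` of higher rank. -/
theorem exists_left_dual_of_unitriangular (ι : U →+ U) (hι : ∀ u v, ι (ι u * v) = ι u * ι v)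
    (b : κ → U) (rk : κ → ℕ)
    (htri : ∀ J, ∃ w, ∀ J', rk J' ≤ rk J → ι (w * b J') = if J = J' then 1 else 0) (J : κ) :
    ∃ u, ∀ J', ι (u * b J') = if J = J' then 1 else 0 := by
  set N := Finset.univ.sup rk
  have hN : ∀ K, rk K ≤ N := fun K => Finset.le_sup (Finset.mem_univ K)
  induction hm : N - rk J using Nat.strong_induction_on generalizing J with
  | _ m ih =>
  have higher : ∀ K, rk J < rk K → ∃ u, ∀ J', ι (u * b J') = if K = J' then 1 else 0 :=
    fun K hK => ih (N - rk K) (by have := hN K; omega) K rfl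
  choose! u hu using higher
  obtain ⟨w, hw⟩ := htri J
  set S := Finset.univ.filter fun K => rk J < rk K
  refine ⟨w - ∑ K ∈ S, ι (w * b K) * u K, fun J' => ?_⟩
  have hcorr : ∑ K ∈ S, ι (ι (w * b K) * u K * b J') = if J' ∈ S then ι (w * b J') else 0 := by
    rw [← Finset.sum_ite_eq' S J' fun K => ι (w * b K)]
    refine Finset.sum_congr rfl fun K hK => ?_
    rw [mul_assoc, hι, hu K (Finset.mem_filter.mp hK).2, mul_ite, mul_one, mul_zero]
  rw [sub_mul, Finset.sum_mul, map_sub, map_sum, hcorr]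
  by_cases hJ' : J' ∈ S
  · have hlt := (Finset.mem_filter.mp hJ').2
    rw [if_pos hJ', sub_self, if_neg (by rintro rfl; exact lt_irrefl _ hlt)]
  · rw [if_neg hJ', sub_zero, hw J' (by simpa [S] using hJ')]

theorem exists_right_dual_of_unitriangular (ι : U →+ U)
    (hι : ∀ u v, ι (v * ι u) = ι v * ι u) (b : κ → U) (rk : κ → ℕ)
    (htri : ∀ J, ∃ w, ∀ J', rk J' ≤ rk J → ι (b J' * w) = if J = J' then 1 else 0) (J : κ) :
    ∃ v, ∀ J', ι (b J' * v) = if J = J' then 1 else 0 := by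
  obtain ⟨v, hv⟩ := exists_left_dual_of_unitriangular ι.mulOp
    (fun u v => MulOpposite.unop_injective (by simp [hι])) (fun K => MulOpposite.op (b K)) rk
    (fun K => have ⟨w, hw⟩ := htri K
      ⟨MulOpposite.op w, fun K' hK' =>
        MulOpposite.unop_injective (by simp [hw K' hK', apply_ite MulOpposite.unop])⟩)
    J
  exact ⟨v.unop, fun J' => by
    simpa [apply_ite MulOpposite.unop] using congrArg MulOpposite.unop (hv J')⟩

end Unitriangular

lemma Finset.compl_union_eq_univ_iff_eq {α : Type*} [Fintype α] [DecidableEq α]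
    {J J' : Finset α} (h : J'.card ≤ J.card) : Jᶜ ∪ J' = Finset.univ ↔ J = J' := by
  have hsub : Jᶜ ∪ J' = Finset.univ ↔ J ⊆ J' := by
    simp [Finset.eq_univ_iff_forall, Finset.subset_iff, or_iff_not_imp_left]
  rw [hsub]
  exact ⟨fun hs => Finset.eq_of_subset_of_card_le hs h, fun h => h ▸ subset_refl J⟩

section Pairing

variable {U : Type*} [Ring U] [Algebra ℂ U] {I : Type*} [LinearOrder I] [Fintype I]
  {g0 g1 : Submodule ℂ U} {x : I → U} {ι : U →ₗ[ℂ] U}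

lemma map_xprod (hker : ∀ u ∈ oddFil g0 x (Fintype.card I - 1), ι u = 0)
    (htop : ι (xprod x Finset.univ) = 1) (K : Finset I) :
    ι (xprod x K) = if K = Finset.univ then 1 else 0 := by
  split_ifs with hK
  · rw [hK, htop]
  · refine hker _ (xprod_mem_oddFil ?_)
    have := Finset.card_lt_card (Finset.ssubset_univ_iff.mpr hK)
    rw [Finset.card_univ] at this
    omega

lemma exists_map_xprod_mul_xprod (h01 : ∀ a ∈ g0, ∀ b ∈ g1, a * b - b * a ∈ g1)
    (h11 : ∀ a ∈ g1, ∀ b ∈ g1, a * b + b * a ∈ g0) (hx : ∀ i, x i ∈ g1)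
    (hxspan : Submodule.span ℂ (Set.range x) = g1)
    (hker : ∀ u ∈ oddFil g0 x (Fintype.card I - 1), ι u = 0) {A B : Finset I}
    (hAB : A.card + B.card ≤ Fintype.card I) :
    ∃ ε : ℂˣ, ι (xprod x A * xprod x B) = ε • ι (xprod x (A ∪ B)) := by
  obtain ⟨ε, hε⟩ := exists_xprod_mul_xprod_sub_mem h01 h11 hx hxspan A B
  refine ⟨ε, sub_eq_zero.mp ?_⟩
  simpa [Units.smul_def] using hker _ (oddFil_mono (by omega) hε)

lemma exists_left_unitriangular (h01 : ∀ a ∈ g0, ∀ b ∈ g1, a * b - b * a ∈ g1)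
    (h11 : ∀ a ∈ g1, ∀ b ∈ g1, a * b + b * a ∈ g0) (hx : ∀ i, x i ∈ g1)
    (hxspan : Submodule.span ℂ (Set.range x) = g1)
    (hker : ∀ u ∈ oddFil g0 x (Fintype.card I - 1), ι u = 0)
    (htop : ι (xprod x Finset.univ) = 1) (J : Finset I) :
    ∃ w, ∀ J', J'.card ≤ J.card → ι (w * xprod x J') = if J = J' then 1 else 0 := by
  have hcard : ∀ J' : Finset I, J'.card ≤ J.card → Jᶜ.card + J'.card ≤ Fintype.card I :=
    fun J' hJ' => by have := J.card_le_univ; rw [Finset.card_compl]; omega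
  obtain ⟨ε, hε⟩ := exists_map_xprod_mul_xprod h01 h11 hx hxspan hker (hcard J le_rfl)
  refine ⟨ε⁻¹ • xprod x Jᶜ, fun J' hJ' => ?_⟩
  rw [smul_mul_assoc, Units.smul_def, map_smul, ← Units.smul_def]
  by_cases hJJ' : J = J'
  · rw [← hJJ', hε, map_xprod hker htop,
      if_pos ((Finset.compl_union_eq_univ_iff_eq le_rfl).mpr rfl), if_pos rfl, inv_smul_smul]
  · obtain ⟨ε', hε'⟩ := exists_map_xprod_mul_xprod h01 h11 hx hxspan hker (hcard J' hJ')
    rw [hε', map_xprod hker htop, if_neg ((Finset.compl_union_eq_univ_iff_eq hJ').not.mpr hJJ'),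
      if_neg hJJ', smul_zero, smul_zero]

lemma exists_right_unitriangular (h01 : ∀ a ∈ g0, ∀ b ∈ g1, a * b - b * a ∈ g1)
    (h11 : ∀ a ∈ g1, ∀ b ∈ g1, a * b + b * a ∈ g0) (hx : ∀ i, x i ∈ g1)
    (hxspan : Submodule.span ℂ (Set.range x) = g1)
    (hker : ∀ u ∈ oddFil g0 x (Fintype.card I - 1), ι u = 0)
    (htop : ι (xprod x Finset.univ) = 1) (J : Finset I) :
    ∃ w, ∀ J', J'.card ≤ J.card → ι (xprod x J' * w) = if J = J' then 1 else 0 := by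
  have hcard : ∀ J' : Finset I, J'.card ≤ J.card → J'.card + Jᶜ.card ≤ Fintype.card I :=
    fun J' hJ' => by have := J.card_le_univ; rw [Finset.card_compl]; omega
  obtain ⟨ε, hε⟩ := exists_map_xprod_mul_xprod h01 h11 hx hxspan hker (hcard J le_rfl)
  refine ⟨ε⁻¹ • xprod x Jᶜ, fun J' hJ' => ?_⟩
  rw [mul_smul_comm, Units.smul_def, map_smul, ← Units.smul_def]
  by_cases hJJ' : J = J'
  · rw [← hJJ', hε, map_xprod hker htop, if_pos (Finset.union_compl J), if_pos rfl,
      inv_smul_smul]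
  · obtain ⟨ε', hε'⟩ := exists_map_xprod_mul_xprod h01 h11 hx hxspan hker (hcard J' hJ')
    rw [hε', map_xprod hker htop, Finset.union_comm,
      if_neg ((Finset.compl_union_eq_univ_iff_eq hJ').not.mpr hJJ'), if_neg hJJ', smul_zero,
      smul_zero]

end Pairing

theorem pairing_dual_elements_general
    {U : Type*} [Ring U] [Algebra ℂ U]
    (g0 g1 : Submodule ℂ U)
    (h01 : ∀ a ∈ g0, ∀ b ∈ g1, a * b - b * a ∈ g1)
    (h11 : ∀ a ∈ g1, ∀ b ∈ g1, a * b + b * a ∈ g0)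
    {I : Type*} [LinearOrder I] (x : I → U)
    (hx : ∀ i, x i ∈ g1)
    (hxspan : Submodule.span ℂ (Set.range x) = g1)
    [Fintype I]
    (ι : U →ₗ[ℂ] U)
    (hιmem : ∀ u : U, ι u ∈ evenEnv g0)
    (hιleft : ∀ u0 ∈ evenEnv g0, ∀ u : U, ι (u0 * u) = u0 * ι u)
    (hιright : ∀ u0 ∈ evenEnv g0, ∀ u : U, ι (u * u0) = ι u * u0)
    (hιker : ∀ u : U, ι u = 0 ↔ u ∈ oddFil g0 x (Fintype.card I - 1))
    (hιtop : ι (xprod x Finset.univ) = 1) :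
    ∀ J : Finset I,
      (∃ uJ : U, ∀ J' : Finset I,
        ι (uJ * xprod x J') = if J = J' then 1 else 0) ∧
      (∃ vJ : U, ∀ J' : Finset I,
        ι (xprod x J' * vJ) = if J = J' then 1 else 0) := by
  have hker : ∀ u ∈ oddFil g0 x (Fintype.card I - 1), ι u = 0 := fun u hu => (hιker u).mpr hu
  intro J
  exact ⟨exists_left_dual_of_unitriangular ι.toAddMonoidHom (fun u v => hιleft _ (hιmem u) v)
      (xprod x) Finset.card (exists_left_unitriangular h01 h11 hx hxspan hker hιtop) J,
    exists_right_dual_of_unitriangular ι.toAddMonoidHom (fun u v => hιright _ (hιmem u) v)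
      (xprod x) Finset.card (exists_right_unitriangular h01 h11 hx hxspan hker hιtop) J⟩

/-- With `ι` the `U(g₀)`-bimodule projection of STATEMENT 12 and the
pairing `(u|u') = ι(uu')`, for every subset `J ⊆ I` there exist `u_J, v_J ∈ U(g)`
such that `(u_J | x_{J'}) = δ_{J,J'}` and `(x_{J'} | v_J) = δ_{J,J'}` for all `J' ⊆ I`. -/
theorem pairing_dual_elements
    {U : Type*} [Ring U] [Algebra ℂ U]
    (𝒜 : ZMod 2 → Submodule ℂ U) [GradedAlgebra 𝒜]
    (g0 g1 : Submodule ℂ U) (hg0 : g0 ≤ 𝒜 0) (hg1 : g1 ≤ 𝒜 1)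
    (h00 : ∀ a ∈ g0, ∀ b ∈ g0, a * b - b * a ∈ g0)
    (h01 : ∀ a ∈ g0, ∀ b ∈ g1, a * b - b * a ∈ g1)
    (h11 : ∀ a ∈ g1, ∀ b ∈ g1, a * b + b * a ∈ g0)
    (hgen : Algebra.adjoin ℂ ((g0 : Set U) ∪ (g1 : Set U)) = ⊤)
    {I : Type*} [LinearOrder I] (x : I → U)
    (hx : ∀ i, x i ∈ g1) (hxind : LinearIndependent ℂ x)
    (hxspan : Submodule.span ℂ (Set.range x) = g1)
    (hfree : ∀ u : U, ∃ c : Finset I →₀ U, (∀ J, c J ∈ evenEnv g0) ∧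
      u = c.sum fun J uJ => uJ * xprod x J)
    (hind : ∀ c : Finset I →₀ U, (∀ J, c J ∈ evenEnv g0) →
      (c.sum fun J uJ => uJ * xprod x J) = 0 → c = 0)
    [Fintype I]
    (htop : ∀ y ∈ g0, y * xprod x Finset.univ - xprod x Finset.univ * y ∈
      oddFil g0 x (Fintype.card I - 1))
    (ι : U →ₗ[ℂ] U)
    (hιmem : ∀ u : U, ι u ∈ evenEnv g0)
    (hιleft : ∀ u0 ∈ evenEnv g0, ∀ u : U, ι (u0 * u) = u0 * ι u)
    (hιright : ∀ u0 ∈ evenEnv g0, ∀ u : U, ι (u * u0) = ι u * u0)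
    (hιker : ∀ u : U, ι u = 0 ↔ u ∈ oddFil g0 x (Fintype.card I - 1))
    (hιtop : ι (xprod x Finset.univ) = 1) :
    ∀ J : Finset I,
      (∃ uJ : U, ∀ J' : Finset I,
        ι (uJ * xprod x J') = if J = J' then 1 else 0) ∧
      (∃ vJ : U, ∀ J' : Finset I,
        ι (xprod x J' * vJ) = if J = J' then 1 else 0) :=
  pairing_dual_elements_general g0 g1 h01 h11 x hx hxspan ι hιmem hιleft hιright hιker hιtop

end
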